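/- If a finite set of Wang tiles admits a tiling of the plane, then there exists a tiling f of the plane by this tileset such that every tile that appears somewhere in f appears at least twice in some row of f. -/

import Mathlib

/-!
Choose a tiling `f` whose set of occurring tiles is minimal. If an occurring tile `t` appeared at
most once in every row of `f`, then any cluster point of the horizontal translates
`(i, j) ↦ f (i + n) j`, `n → ∞`, would again be a tiling (by compactness of the space of
configurations), using only tiles of `f` but never `t`: each of its entries recurs in its row of `f`
arbitrarily far to the right. This contradicts minimality.
-/

structure WangTile (C : Type) where
  e : C
  w : C
  n : C
  s : C
deriving DecidableEq

def IsTiling {C : Type} (τ : Set (WangTile C)) (f : ℤ → ℤ → WangTile C) : Prop :=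
  (∀ i j, f i j ∈ τ) ∧ (∀ i j, (f i j).e = (f (i+1) j).w) ∧
    (∀ i j, (f i j).n = (f i (j+1)).s)

open Filter Set

namespace WangTile

variable {C : Type}

instance : TopologicalSpace (WangTile C) := ⊥

instance : DiscreteTopology (WangTile C) := ⟨rfl⟩

def tilesOf (f : ℤ → ℤ → WangTile C) : Set (WangTile C) := {t | ∃ i j, f i j = t}

theorem eventually_apply_eq (g : ℤ → ℤ → WangTile C) (i j : ℤ) :
    ∀ᶠ f in nhds g, f i j = g i j :=
  (continuous_apply_apply i j).continuousAt ((isOpen_discrete {g i j}).mem_nhds rfl)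

theorem isClosed_setOf_isTiling (τ : Set (WangTile C)) :
    IsClosed {f : ℤ → ℤ → WangTile C | IsTiling τ f} := by
  have hcont (i j : ℤ) : Continuous fun f : ℤ → ℤ → WangTile C => f i j :=
    continuous_apply_apply i j
  have hpair (i j i' j' : ℤ) (r : WangTile C → WangTile C → Prop) :
      IsClosed {f : ℤ → ℤ → WangTile C | r (f i j) (f i' j')} :=
    (isClosed_discrete {p : WangTile C × WangTile C | r p.1 p.2}).preimage
      ((hcont i j).prodMk (hcont i' j'))
  simp only [IsTiling, ofPred_and, ofPred_forall]
  exact .inter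
    (isClosed_iInter fun i => isClosed_iInter fun j =>
      (isClosed_discrete τ).preimage (hcont i j))
    (.inter (isClosed_iInter fun i => isClosed_iInter fun j => hpair i j (i + 1) j (·.e = ·.w))
      (isClosed_iInter fun i => isClosed_iInter fun j => hpair i j i (j + 1) (·.n = ·.s)))

theorem isCompact_setOf_forall_mem {τ : Set (WangTile C)} (hτ : τ.Finite) :
    IsCompact {f : ℤ → ℤ → WangTile C | ∀ i j, f i j ∈ τ} := by
  simpa [Set.pi] using
    isCompact_univ_pi fun _ : ℤ => isCompact_univ_pi fun _ : ℤ => hτ.isCompact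

end WangTile

open WangTile

namespace IsTiling

variable {C : Type} {τ : Set (WangTile C)} {f : ℤ → ℤ → WangTile C}

theorem tilesOf_subset (hf : IsTiling τ f) : tilesOf f ⊆ τ := by
  rintro _ ⟨i, j, rfl⟩
  exact hf.1 i j

theorem comp_add_right (hf : IsTiling τ f) (n : ℤ) : IsTiling τ fun i j => f (i + n) j := by
  obtain ⟨hmem, hew, hns⟩ := hf
  refine ⟨fun i j => hmem _ _, fun i j => ?_, fun i j => hns _ _⟩
  simpa only [add_right_comm] using hew (i + n) j

theorem exists_tilesOf_subset_diff (hf : IsTiling τ f) (hτ : τ.Finite) {t : WangTile C}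
    (ht : ¬∃ j i i', i ≠ i' ∧ f i j = t ∧ f i' j = t) :
    ∃ g, IsTiling τ g ∧ tilesOf g ⊆ tilesOf f \ {t} := by
  obtain ⟨g, -, hg⟩ := (isCompact_setOf_forall_mem hτ).exists_mapClusterPt_of_frequently
    (l := atTop) (f := fun (n : ℕ) i j => f (i + n) j) (.of_forall fun n i j => hf.1 (i + n) j)
  have hrec (i j : ℤ) (N : ℕ) : ∃ n ≥ N, f (i + n) j = g i j :=
    frequently_atTop.1 (hg.frequently (eventually_apply_eq g i j)) N
  refine ⟨g, (isClosed_setOf_isTiling τ).mem_of_mapClusterPt hg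
    (Eventually.of_forall fun n => hf.comp_add_right n), ?_⟩
  rintro _ ⟨i, j, rfl⟩
  obtain ⟨n, -, hn⟩ := hrec i j 0
  refine ⟨⟨i + n, j, hn⟩, fun hgt => ht ?_⟩
  obtain ⟨m, hm, hm'⟩ := hrec i j (n + 1)
  exact ⟨j, i + n, i + m, by omega, hn.trans hgt, hm'.trans hgt⟩

end IsTiling

theorem stmt0_general {C : Type} (τ : Finset (WangTile C))
    (h : ∃ f, IsTiling (↑τ : Set (WangTile C)) f) :
    ∃ f, IsTiling (↑τ : Set (WangTile C)) f ∧
      ∀ t, (∃ i j, f i j = t) → ∃ j i i', i ≠ i' ∧ f i j = t ∧ f i' j = t := by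
  have hfin : (tilesOf '' {f | IsTiling (↑τ : Set (WangTile C)) f}).Finite :=
    τ.finite_toSet.finite_subsets.subset (by rintro _ ⟨f, hf, rfl⟩; exact hf.tilesOf_subset)
  obtain ⟨f, hf, hmin⟩ := hfin.exists_minimalFor' tilesOf _ h
  refine ⟨f, hf, fun t ht => by_contra fun hrep => ?_⟩
  obtain ⟨g, hg, hsub⟩ := hf.exists_tilesOf_subset_diff τ.finite_toSet hrep
  exact (hsub (hmin hg (hsub.trans sdiff_subset) ht)).2 rfl

theorem stmt0 {C : Type} [Fintype C] [DecidableEq C] (τ : Finset (WangTile C))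
    (h : ∃ f, IsTiling (↑τ : Set (WangTile C)) f) :
    ∃ f, IsTiling (↑τ : Set (WangTile C)) f ∧
      ∀ t, (∃ i j, f i j = t) → ∃ j i i', i ≠ i' ∧ f i j = t ∧ f i' j = t :=
  stmt0_general τ h
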